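/- arXiv:2405.00212 — 4 statements merged into one kernel-verified Lean document; each statement's English description precedes it below -/
import Mathlib

section
/- For every M > 0 and every x ∈ ℝⁿ with 0 < |x| < 2 there exist constants c, t₀ > 0 depending only on M and |x| such that for every radial set K ⊆ ℝⁿ with ρ_K ≤ M and every t ∈ (0, t₀): G_{K_t}(x) ∖ T(ct) = L(K_t, x) ∖ T(ct), where T(r) = {y ∈ ℝⁿ : dist(y, S^{n−1} ∩ (S^{n−1}+x)) ≤ r}. -/
open MeasureTheory Metric Set Pointwise

/-- The radial set associated with a function `ρ` on the unit sphere: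
`{0} ∪ {x ≠ 0 : ‖x‖ ≤ ρ(x/‖x‖)}`. -/
def radialSet {n : ℕ} (ρ : EuclideanSpace ℝ (Fin n) → ℝ) :
    Set (EuclideanSpace ℝ (Fin n)) :=
  {0} ∪ {x | x ≠ 0 ∧ ‖x‖ ≤ ρ (‖x‖⁻¹ • x)}

/-- `[f,g]_A = {τ·y : y ∈ A, τ ∈ [f(y), g(y)]}`. -/
def radialSegments {n : ℕ} (A : Set (EuclideanSpace ℝ (Fin n)))
    (f g : EuclideanSpace ℝ (Fin n) → ℝ) : Set (EuclideanSpace ℝ (Fin n)) :=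
  {p | ∃ y ∈ A, ∃ τ : ℝ, f y ≤ τ ∧ τ ≤ g y ∧ p = τ • y}

/-!
Write `K_t = radialSet g` with `1 ≤ g ≤ 1 + ε` on the unit sphere, `ε = tM`, and let
`Z = S^{n-1} ∩ (S^{n-1} + x)`. A point of `G_{K_t}(x)` or of `L(K_t, x)` lying outside one of the
unit balls has the form `τ u` with `‖u‖ = 1` and `1 ≤ τ ≤ 1 + ε`, so it is within `ε` of `u`.
The two descriptions can only differ at such points with `|‖u - x‖ - 1| ≤ 2ε`, and for `0 < ‖x‖ < 2`
the transversality of the two unit spheres gives `dist(u, Z) ≤ C |‖u - x‖ - 1|`; so all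
discrepancies lie within `(1 + 2C) ε` of `Z`. The part near `x` is the same statement for `-x`
after translating by `x`.
-/

open scoped RealInnerProductSpace

theorem abs_sub_le_abs_sq_sub_sq_div {p b : ℝ} (hp : 0 ≤ p) (hb : 0 < b) :
    |p - b| ≤ |p ^ 2 - b ^ 2| / b := by
  rw [le_div_iff₀ hb, show p ^ 2 - b ^ 2 = (p - b) * (p + b) by ring, abs_mul,
    abs_of_pos (by positivity : 0 < p + b)]
  exact mul_le_mul_of_nonneg_left (by linarith) (abs_nonneg _)

section NormedGroup

variable {E : Type*} [NormedAddCommGroup E]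

theorem mem_add_singleton_iff {A : Set E} {x y : E} : y ∈ A + {x} ↔ y - x ∈ A := by
  simp [Set.add_singleton, Set.image_add_right, sub_eq_add_neg]

theorem infDist_sub_sphere_inter_sphere_neg (x y : E) :
    infDist (y - x) (sphere 0 1 ∩ sphere (-x) 1) = infDist y (sphere 0 1 ∩ sphere x 1) := by
  let Φ := IsometryEquiv.addRight x
  have himage : Φ '' (sphere 0 1 ∩ sphere (-x) 1) = sphere 0 1 ∩ sphere x 1 := by
    rw [image_inter Φ.injective, Φ.image_sphere, Φ.image_sphere, inter_comm]
    simp [Φ]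
  rw [← himage, ← infDist_image Φ.isometry]
  simp [Φ]

theorem infDist_le_two_of_subset_sphere {u : E} {Z : Set E} (hu : ‖u‖ = 1)
    (hZ : Z ⊆ sphere 0 1) : infDist u Z ≤ 2 := by
  rcases Z.eq_empty_or_nonempty with rfl | ⟨z, hz⟩
  · simp
  · calc infDist u Z ≤ dist u z := infDist_le_dist_of_mem hz
      _ ≤ ‖u‖ + ‖z‖ := by rw [dist_eq_norm]; exact norm_sub_le u z
      _ = 2 := by rw [hu, mem_sphere_zero_iff_norm.1 (hZ hz)]; norm_num

variable [NormedSpace ℝ E]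

theorem norm_smul_sub_self_le {u : E} {τ ε : ℝ} (hu : ‖u‖ = 1) (hτ : 1 ≤ τ) (hτε : τ ≤ 1 + ε) :
    ‖τ • u - u‖ ≤ ε := by
  rw [show τ • u - u = (τ - 1) • u by rw [sub_smul, one_smul], norm_smul, hu, mul_one,
    Real.norm_of_nonneg (by linarith)]
  linarith

section FarFromIntersection

variable {Z : Set E} {x u : E} {C ε τ : ℝ}

theorem two_mul_lt_abs_norm_sub_sub_one (hC : 0 < C)
    (hZ : infDist u Z ≤ C * |‖u - x‖ - 1|) (hu : ‖u‖ = 1) (hτ : 1 ≤ τ) (hτε : τ ≤ 1 + ε)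
    (hfar : (1 + 2 * C) * ε < infDist (τ • u) Z) : 2 * ε < |‖u - x‖ - 1| := by
  have hclose : infDist (τ • u) Z ≤ infDist u Z + ε :=
    infDist_le_infDist_add_dist.trans
      (add_le_add_right (by rw [dist_eq_norm]; exact norm_smul_sub_self_le hu hτ hτε) _)
  exact lt_of_mul_lt_mul_left (by linarith : C * (2 * ε) < C * |‖u - x‖ - 1|) hC.le

theorem norm_sub_le_one_of_lt_infDist (hC : 0 < C) (hZ : infDist u Z ≤ C * |‖u - x‖ - 1|)
    (hu : ‖u‖ = 1) (hτ : 1 ≤ τ) (hτε : τ ≤ 1 + ε)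
    (hfar : (1 + 2 * C) * ε < infDist (τ • u) Z) (hτx : ‖τ • u - x‖ ≤ 1 + ε) : ‖u - x‖ ≤ 1 := by
  have hgap := two_mul_lt_abs_norm_sub_sub_one hC hZ hu hτ hτε hfar
  have hux : ‖u - x‖ ≤ ‖u - τ • u‖ + ‖τ • u - x‖ := norm_sub_le_norm_sub_add_norm_sub _ _ _
  have hτu := norm_smul_sub_self_le hu hτ hτε
  rw [norm_sub_rev] at hτu
  rcases lt_abs.1 hgap with h | h <;> linarith

theorem norm_smul_sub_le_one_of_lt_infDist (hC : 0 < C) (hZ : infDist u Z ≤ C * |‖u - x‖ - 1|)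
    (hu : ‖u‖ = 1) (hτ : 1 ≤ τ) (hτε : τ ≤ 1 + ε)
    (hfar : (1 + 2 * C) * ε < infDist (τ • u) Z) (hux : ‖u - x‖ ≤ 1) : ‖τ • u - x‖ ≤ 1 := by
  have hgap := two_mul_lt_abs_norm_sub_sub_one hC hZ hu hτ hτε hfar
  have hτx : ‖τ • u - x‖ ≤ ‖τ • u - u‖ + ‖u - x‖ := norm_sub_le_norm_sub_add_norm_sub _ _ _
  have hτu := norm_smul_sub_self_le hu hτ hτε
  rcases lt_abs.1 hgap with h | h <;> linarith

end FarFromIntersection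

end NormedGroup

section SphereIntersection

variable {E : Type*} [NormedAddCommGroup E] [InnerProductSpace ℝ E]

theorem add_mem_sphere_inter_of_inner_eq_zero {x w : E} (hxw : ⟪x, w⟫ = 0)
    (hw : ‖w‖ ^ 2 = 1 - ‖x‖ ^ 2 / 4) :
    (2⁻¹ : ℝ) • x + w ∈ sphere (0 : E) 1 ∩ sphere x 1 := by
  have hsq (s : ℝ) (hs : s ^ 2 = 1 / 4) : ‖s • x + w‖ = 1 := by
    have h : ‖s • x + w‖ ^ 2 = 1 := by
      rw [norm_add_sq_real, real_inner_smul_left, hxw, norm_smul, mul_pow, Real.norm_eq_abs,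
        sq_abs, hs, hw]
      ring
    nlinarith [norm_nonneg (s • x + w)]
  refine ⟨mem_sphere_zero_iff_norm.2 (hsq _ (by norm_num)), mem_sphere_iff_norm.2 ?_⟩
  rw [show (2⁻¹ : ℝ) • x + w - x = (-2⁻¹ : ℝ) • x + w by module]
  exact hsq _ (by norm_num)

/-- The witness is `x / 2 + b • w / ‖w‖`: its `x`-component is that of every point of the
intersection, and its orthogonal part is `w` rescaled to the radius `b` of the intersection. -/
theorem infDist_sphere_inter_le_of_eq_smul_add {u x w : E} {s b : ℝ} (hu : u = s • x + w)
    (hxw : ⟪x, w⟫ = 0) (hw : w ≠ 0) (hb : 0 ≤ b) (hb2 : b ^ 2 = 1 - ‖x‖ ^ 2 / 4) :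
    infDist u (sphere 0 1 ∩ sphere x 1) ≤ |s - 2⁻¹| * ‖x‖ + |‖w‖ - b| := by
  have hw0 : 0 < ‖w‖ := norm_pos_iff.2 hw
  have hv := add_mem_sphere_inter_of_inner_eq_zero (x := x) (w := (b / ‖w‖) • w)
    (by rw [real_inner_smul_right, hxw, mul_zero])
    (by rw [norm_smul, Real.norm_of_nonneg (by positivity), div_mul_cancel₀ _ hw0.ne', hb2])
  calc infDist u (sphere 0 1 ∩ sphere x 1) ≤ dist u ((2⁻¹ : ℝ) • x + (b / ‖w‖) • w) :=
        infDist_le_dist_of_mem hv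
    _ = ‖(s - 2⁻¹) • x + ((‖w‖ - b) / ‖w‖) • w‖ := by
        rw [dist_eq_norm, hu, sub_div, div_self hw0.ne']
        congr 1
        module
    _ ≤ |s - 2⁻¹| * ‖x‖ + |‖w‖ - b| := by
        refine (norm_add_le _ _).trans_eq ?_
        rw [norm_smul, norm_smul, Real.norm_eq_abs, Real.norm_eq_abs, abs_div, abs_norm,
          div_mul_cancel₀ _ hw0.ne']

theorem abs_inner_sub_le_two_mul {u x : E} (hu : ‖u‖ = 1) (hx : ‖x‖ ≤ 2) :
    |⟪u, x⟫ - ‖x‖ ^ 2 / 2| ≤ 2 * |‖u - x‖ - 1| := by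
  have hux : ‖u - x‖ ^ 2 = 1 - 2 * ⟪u, x⟫ + ‖x‖ ^ 2 := by
    rw [norm_sub_sq_real, hu]; ring
  have hfactor : ⟪u, x⟫ - ‖x‖ ^ 2 / 2 = -((‖u - x‖ + 1) / 2) * (‖u - x‖ - 1) := by
    linear_combination (1 / 2 : ℝ) * hux
  have hle : ‖u - x‖ + 1 ≤ 4 := by
    linarith [norm_sub_le u x]
  rw [hfactor, abs_mul, abs_neg, abs_of_nonneg (by positivity)]
  gcongr
  linarith

theorem infDist_sphere_inter_le_of_abs_inner_lt {u x : E} (hu : ‖u‖ = 1) (hx0 : 0 < ‖x‖)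
    (hx2 : ‖x‖ < 2) (hux : |⟪u, x⟫| < ‖x‖) :
    infDist u (sphere 0 1 ∩ sphere x 1) ≤
      (1 + 2 / √(1 - ‖x‖ ^ 2 / 4)) / ‖x‖ * |⟪u, x⟫ - ‖x‖ ^ 2 / 2| := by
  set r := ‖x‖
  set a := ⟪u, x⟫
  set b := √(1 - r ^ 2 / 4)
  have hb2 : b ^ 2 = 1 - r ^ 2 / 4 := Real.sq_sqrt (by nlinarith)
  have hb : 0 < b := Real.sqrt_pos.2 (by nlinarith)
  set w := u - (a / r ^ 2) • x with hw
  have hxw : ⟪x, w⟫ = 0 := by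
    rw [hw, inner_sub_right, real_inner_smul_right, real_inner_self_eq_norm_sq, real_inner_comm]
    field_simp
    ring
  have hw2 : ‖w‖ ^ 2 = 1 - a ^ 2 / r ^ 2 := by
    rw [hw, norm_sub_sq_real, real_inner_smul_right, norm_smul, mul_pow, Real.norm_eq_abs,
      sq_abs, hu]
    field_simp
    ring
  have hw0 : w ≠ 0 := by
    have : a ^ 2 < r ^ 2 := sq_lt_sq' (abs_lt.1 hux).1 (abs_lt.1 hux).2
    have : 0 < ‖w‖ ^ 2 := by rw [hw2, sub_pos, div_lt_one (by positivity)]; exact this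
    exact norm_pos_iff.1 (pos_of_mul_pos_left (by nlinarith) (norm_nonneg w))
  have hparallel : |a / r ^ 2 - 2⁻¹| * r = |a - r ^ 2 / 2| / r := by
    rw [show a / r ^ 2 - 2⁻¹ = (a - r ^ 2 / 2) / r ^ 2 by field_simp, abs_div,
      abs_of_pos (by positivity : 0 < r ^ 2)]
    field_simp
  have hortho : |‖w‖ - b| ≤ 2 / (r * b) * |a - r ^ 2 / 2| := by
    have hsq : ‖w‖ ^ 2 - b ^ 2 = (r ^ 2 / 2 - a) * (r ^ 2 / 2 + a) / r ^ 2 := by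
      rw [hw2, hb2]
      field_simp
      ring
    have hsum : |r ^ 2 / 2 + a| ≤ 2 * r := by
      rw [abs_le]; constructor <;> nlinarith [abs_lt.1 hux]
    refine (abs_sub_le_abs_sq_sub_sq_div (norm_nonneg w) hb).trans ?_
    rw [hsq, abs_div, abs_mul, abs_sub_comm, abs_of_pos (by positivity : 0 < r ^ 2),
      div_div, div_le_iff₀ (by positivity)]
    calc |a - r ^ 2 / 2| * |r ^ 2 / 2 + a| ≤ |a - r ^ 2 / 2| * (2 * r) := by gcongr
      _ = 2 / (r * b) * |a - r ^ 2 / 2| * (r ^ 2 * b) := by field_simp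
  calc infDist u (sphere 0 1 ∩ sphere x 1) ≤ |a / r ^ 2 - 2⁻¹| * r + |‖w‖ - b| :=
        infDist_sphere_inter_le_of_eq_smul_add (by rw [hw]; abel) hxw hw0 hb.le hb2
    _ ≤ |a - r ^ 2 / 2| / r + 2 / (r * b) * |a - r ^ 2 / 2| := by rw [hparallel]; gcongr
    _ = (1 + 2 / b) / r * |a - r ^ 2 / 2| := by field_simp

/-- Away from the intersection the trivial bound `infDist ≤ 2` suffices, since `|‖u - x‖ - 1|`
is then bounded below. -/
theorem exists_infDist_sphere_inter_le {r : ℝ} (hr0 : 0 < r) (hr2 : r < 2) :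
    ∃ C > 0, ∀ x u : E, ‖x‖ = r → ‖u‖ = 1 →
      infDist u (sphere 0 1 ∩ sphere x 1) ≤ C * |‖u - x‖ - 1| := by
  set K := (1 + 2 / √(1 - r ^ 2 / 4)) / r
  set m := r - r ^ 2 / 2 with hm_def
  have hm : 0 < m := by nlinarith
  refine ⟨2 * K + 4 / m, by positivity, fun x u hx hu => ?_⟩
  have hdist := abs_inner_sub_le_two_mul hu (hx.le.trans hr2.le)
  rw [hx] at hdist
  have hK : 0 ≤ K := by positivity
  have hm' : 0 ≤ 4 / m := by positivity
  by_cases hnear : |⟪u, x⟫ - r ^ 2 / 2| < m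
  · have hux : |⟪u, x⟫| < ‖x‖ := by
      rw [hx, abs_lt]
      constructor <;> nlinarith [abs_lt.1 hnear]
    calc infDist u (sphere 0 1 ∩ sphere x 1) ≤ K * |⟪u, x⟫ - r ^ 2 / 2| := by
          simpa only [hx] using
            infDist_sphere_inter_le_of_abs_inner_lt hu (hx ▸ hr0) (hx ▸ hr2) hux
      _ ≤ K * (2 * |‖u - x‖ - 1|) := by gcongr
      _ ≤ (2 * K + 4 / m) * |‖u - x‖ - 1| := by nlinarith [abs_nonneg (‖u - x‖ - 1)]
  · calc infDist u (sphere 0 1 ∩ sphere x 1) ≤ 2 :=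
          infDist_le_two_of_subset_sphere hu inter_subset_left
      _ ≤ 4 / m * |‖u - x‖ - 1| := by
          rw [div_mul_eq_mul_div, le_div_iff₀ hm]
          linarith
      _ ≤ (2 * K + 4 / m) * |‖u - x‖ - 1| := by nlinarith [abs_nonneg (‖u - x‖ - 1)]

end SphereIntersection

section Radial

variable {n : ℕ} {g : EuclideanSpace ℝ (Fin n) → ℝ}

theorem mem_radialSet_of_norm_le_one (hg : ∀ v ∈ sphere (0 : EuclideanSpace ℝ (Fin n)) 1, 1 ≤ g v)
    {y : EuclideanSpace ℝ (Fin n)} (hy : ‖y‖ ≤ 1) : y ∈ radialSet g := by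
  rcases eq_or_ne y 0 with rfl | hy0
  · exact Or.inl rfl
  · exact Or.inr ⟨hy0, hy.trans (hg _ (mem_sphere_zero_iff_norm.2 (norm_smul_inv_norm hy0)))⟩

theorem smul_mem_radialSet {u : EuclideanSpace ℝ (Fin n)} {τ : ℝ} (hu : ‖u‖ = 1) (hτ : 0 < τ)
    (hτg : τ ≤ g u) : τ • u ∈ radialSet g := by
  have hnorm : ‖τ • u‖ = τ := by rw [norm_smul, hu, mul_one, Real.norm_of_nonneg hτ.le]
  refine Or.inr ⟨smul_ne_zero hτ.ne' (norm_pos_iff.1 (hu ▸ one_pos)), ?_⟩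
  rwa [hnorm, inv_smul_smul₀ hτ.ne']

theorem norm_le_of_mem_radialSet {R : ℝ} (hR : 0 ≤ R)
    (hg : ∀ v ∈ sphere (0 : EuclideanSpace ℝ (Fin n)) 1, g v ≤ R) {y : EuclideanSpace ℝ (Fin n)}
    (hy : y ∈ radialSet g) : ‖y‖ ≤ R := by
  rcases hy with rfl | ⟨hy0, hyg⟩
  · rwa [norm_zero]
  · exact hyg.trans (hg _ (mem_sphere_zero_iff_norm.2 (norm_smul_inv_norm hy0)))

variable {Z : Set (EuclideanSpace ℝ (Fin n))} {x y : EuclideanSpace ℝ (Fin n)} {C ε : ℝ}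

theorem mem_radialSegments_of_lt_infDist (hC : 0 < C)
    (hZ : ∀ u, ‖u‖ = 1 → infDist u Z ≤ C * |‖u - x‖ - 1|)
    (hg : ∀ v ∈ sphere (0 : EuclideanSpace ℝ (Fin n)) 1, g v ≤ 1 + ε)
    (hfar : (1 + 2 * C) * ε < infDist y Z)
    (hyK : y ∈ radialSet g) (hy1 : 1 < ‖y‖) (hyx : ‖y - x‖ ≤ 1 + ε) :
    y ∈ radialSegments (sphere 0 1 ∩ closedBall x 1) (fun _ => 1) g := by
  have hy0 : y ≠ 0 := norm_pos_iff.1 (by linarith)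
  set u := ‖y‖⁻¹ • y
  have hu : ‖u‖ = 1 := norm_smul_inv_norm hy0
  have huS : u ∈ sphere (0 : EuclideanSpace ℝ (Fin n)) 1 := mem_sphere_zero_iff_norm.2 hu
  have hyu : ‖y‖ • u = y := smul_inv_smul₀ (norm_ne_zero_iff.2 hy0) y
  have hyg : ‖y‖ ≤ g u := (hyK.resolve_left hy0).2
  refine ⟨u, ⟨huS, mem_closedBall_iff_norm.2 ?_⟩, ‖y‖, hy1.le, hyg, hyu.symm⟩
  rw [← hyu] at hfar hyx
  exact norm_sub_le_one_of_lt_infDist hC (hZ u hu) hu hy1.le (hyg.trans (hg u huS)) hfar hyx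

theorem mem_radialSet_and_norm_sub_le_one_of_lt_infDist (hC : 0 < C)
    (hZ : ∀ u, ‖u‖ = 1 → infDist u Z ≤ C * |‖u - x‖ - 1|)
    (hg : ∀ v ∈ sphere (0 : EuclideanSpace ℝ (Fin n)) 1, g v ≤ 1 + ε)
    (hfar : (1 + 2 * C) * ε < infDist y Z)
    (hy : y ∈ radialSegments (sphere 0 1 ∩ closedBall x 1) (fun _ => 1) g) :
    y ∈ radialSet g ∧ ‖y - x‖ ≤ 1 := by
  obtain ⟨u, ⟨huS, hux⟩, τ, hτ, hτg, rfl⟩ := hy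
  have hu : ‖u‖ = 1 := mem_sphere_zero_iff_norm.1 huS
  exact ⟨smul_mem_radialSet hu (by linarith) hτg,
    norm_smul_sub_le_one_of_lt_infDist hC (hZ u hu) hu hτ (hτg.trans (hg u huS)) hfar
      (mem_closedBall_iff_norm.1 hux)⟩

theorem inter_add_singleton_diff_eq (hε : 0 ≤ ε) (hC : 0 < C)
    (hg : ∀ v ∈ sphere (0 : EuclideanSpace ℝ (Fin n)) 1, 1 ≤ g v ∧ g v ≤ 1 + ε)
    (hZ : ∀ u, ‖u‖ = 1 → infDist u (sphere 0 1 ∩ sphere x 1) ≤ C * |‖u - x‖ - 1|)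
    (hZ' : ∀ u, ‖u‖ = 1 → infDist u (sphere 0 1 ∩ sphere (-x) 1) ≤ C * |‖u - -x‖ - 1|) :
    (radialSet g ∩ (radialSet g + {x})) \
        {y | infDist y (sphere 0 1 ∩ sphere x 1) ≤ (1 + 2 * C) * ε} =
      ((closedBall 0 1 ∩ closedBall x 1)
          ∪ radialSegments (sphere 0 1 ∩ closedBall x 1) (fun _ => 1) g
          ∪ (radialSegments (sphere 0 1 ∩ closedBall (-x) 1) (fun _ => 1) g + {x})) \
        {y | infDist y (sphere 0 1 ∩ sphere x 1) ≤ (1 + 2 * C) * ε} := by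
  have hK (z : EuclideanSpace ℝ (Fin n)) (hz : z ∈ radialSet g) : ‖z‖ ≤ 1 + ε :=
    norm_le_of_mem_radialSet (by linarith) (fun v hv => (hg v hv).2) hz
  have hB (z : EuclideanSpace ℝ (Fin n)) (hz : ‖z‖ ≤ 1) : z ∈ radialSet g :=
    mem_radialSet_of_norm_le_one (fun v hv => (hg v hv).1) hz
  have hgε : ∀ v ∈ sphere (0 : EuclideanSpace ℝ (Fin n)) 1, g v ≤ 1 + ε :=
    fun v hv => (hg v hv).2
  ext y
  simp only [mem_sdiff, mem_inter_iff, mem_union, mem_add_singleton_iff, mem_ofPred_eq, not_le,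
    mem_closedBall_iff_norm, sub_zero]
  refine and_congr_left fun hfar => ?_
  have hfar' := (infDist_sub_sphere_inter_sphere_neg x y).symm ▸ hfar
  constructor
  · rintro ⟨hyK, hyxK⟩
    by_cases h1 : 1 < ‖y‖
    · exact Or.inl (Or.inr
        (mem_radialSegments_of_lt_infDist hC hZ hgε hfar hyK h1 (hK _ hyxK)))
    by_cases h2 : 1 < ‖y - x‖
    · refine Or.inr (mem_radialSegments_of_lt_infDist hC hZ' hgε hfar' hyxK h2 ?_)
      simpa using hK _ hyK
    exact Or.inl (Or.inl ⟨not_lt.1 h1, not_lt.1 h2⟩)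
  · rintro ((⟨h1, h2⟩ | hseg) | hseg)
    · exact ⟨hB _ h1, hB _ h2⟩
    · obtain ⟨hyK, h2⟩ := mem_radialSet_and_norm_sub_le_one_of_lt_infDist hC hZ hgε hfar hseg
      exact ⟨hyK, hB _ h2⟩
    · obtain ⟨hyxK, h1⟩ :=
        mem_radialSet_and_norm_sub_le_one_of_lt_infDist hC hZ' hgε hfar' hseg
      exact ⟨hB _ (by simpa using h1), hyxK⟩

end Radial

theorem stmt4_general (n : ℕ) (M : ℝ) (hM : 0 < M)
    (x : EuclideanSpace ℝ (Fin n)) (hx0 : 0 < ‖x‖) (hx2 : ‖x‖ < 2) :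
    ∃ c > (0 : ℝ), ∃ t₀ > (0 : ℝ),
      ∀ ρ : EuclideanSpace ℝ (Fin n) → ℝ,
        ContinuousOn ρ (sphere (0 : EuclideanSpace ℝ (Fin n)) 1) →
        (∀ v ∈ sphere (0 : EuclideanSpace ℝ (Fin n)) 1, 0 ≤ ρ v ∧ ρ v ≤ M) →
        ∀ t ∈ Set.Ioo (0 : ℝ) t₀,
          (radialSet (fun v => 1 + t * ρ v) ∩ (radialSet (fun v => 1 + t * ρ v) + {x})) \
              {y : EuclideanSpace ℝ (Fin n) |
                infDist y (sphere (0 : EuclideanSpace ℝ (Fin n)) 1 ∩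
                  (sphere (0 : EuclideanSpace ℝ (Fin n)) 1 + {x})) ≤ c * t}
            = ((closedBall (0 : EuclideanSpace ℝ (Fin n)) 1 ∩ closedBall x 1)
                ∪ radialSegments (sphere (0 : EuclideanSpace ℝ (Fin n)) 1 ∩ closedBall x 1)
                    (fun _ => 1) (fun v => 1 + t * ρ v)
                ∪ (radialSegments (sphere (0 : EuclideanSpace ℝ (Fin n)) 1 ∩ closedBall (-x) 1)
                    (fun _ => 1) (fun v => 1 + t * ρ v) + {x})) \
              {y : EuclideanSpace ℝ (Fin n) |
                infDist y (sphere (0 : EuclideanSpace ℝ (Fin n)) 1 ∩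
                  (sphere (0 : EuclideanSpace ℝ (Fin n)) 1 + {x})) ≤ c * t} := by
  obtain ⟨C, hC, hZ⟩ :=
    exists_infDist_sphere_inter_le (E := EuclideanSpace ℝ (Fin n)) hx0 hx2
  -- the estimate holds for every `t > 0`, so any `t₀` will do
  refine ⟨(1 + 2 * C) * M, by positivity, 1, one_pos, fun ρ _ hρ t ht => ?_⟩
  have hg : ∀ v ∈ sphere (0 : EuclideanSpace ℝ (Fin n)) 1,
      1 ≤ 1 + t * ρ v ∧ 1 + t * ρ v ≤ 1 + t * M := fun v hv =>
    ⟨by nlinarith [(hρ v hv).1, ht.1], by nlinarith [(hρ v hv).2, ht.1]⟩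
  rw [sphere_zero_add_singleton, show (1 + 2 * C) * M * t = (1 + 2 * C) * (t * M) by ring]
  exact inter_add_singleton_diff_eq (by nlinarith [ht.1]) hC hg (fun u => hZ x u rfl)
    (fun u => hZ (-x) u (norm_neg x))

/-- For every `M > 0` and `x ∈ ℝⁿ` with `0 < |x| < 2` there
exist `c, t₀ > 0` depending only on `M` and `|x|` such that for every radial
set `K` with `ρ_K ≤ M` and every `t ∈ (0,t₀)`:
`G_{K_t}(x) ∖ T(ct) = L(K_t,x) ∖ T(ct)`, where `K_t` has radial function
`1 + t·ρ_K`, `G_L(x) = L ∩ (L+x)`,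
`L(K_t,x) = (𝔹 ∩ (𝔹+x)) ⊔ [1,ρ_{K_t}]_{C(x)} ⊔ ([1,ρ_{K_t}]_{C(−x)} + x)`,
`C(x) = S^{n−1} ∩ (𝔹+x)`, and `T(r)` is the `r`-neighborhood of
`S^{n−1} ∩ (S^{n−1}+x)`. -/
theorem stmt4 (n : ℕ) (hn : 1 ≤ n) (M : ℝ) (hM : 0 < M)
    (x : EuclideanSpace ℝ (Fin n)) (hx0 : 0 < ‖x‖) (hx2 : ‖x‖ < 2) :
    ∃ c > (0 : ℝ), ∃ t₀ > (0 : ℝ),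
      ∀ ρ : EuclideanSpace ℝ (Fin n) → ℝ,
        ContinuousOn ρ (sphere (0 : EuclideanSpace ℝ (Fin n)) 1) →
        (∀ v ∈ sphere (0 : EuclideanSpace ℝ (Fin n)) 1, 0 ≤ ρ v ∧ ρ v ≤ M) →
        ∀ t ∈ Set.Ioo (0 : ℝ) t₀,
          (radialSet (fun v => 1 + t * ρ v) ∩ (radialSet (fun v => 1 + t * ρ v) + {x})) \
              {y : EuclideanSpace ℝ (Fin n) |
                infDist y (sphere (0 : EuclideanSpace ℝ (Fin n)) 1 ∩
                  (sphere (0 : EuclideanSpace ℝ (Fin n)) 1 + {x})) ≤ c * t}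
            = ((closedBall (0 : EuclideanSpace ℝ (Fin n)) 1 ∩ closedBall x 1)
                ∪ radialSegments (sphere (0 : EuclideanSpace ℝ (Fin n)) 1 ∩ closedBall x 1)
                    (fun _ => 1) (fun v => 1 + t * ρ v)
                ∪ (radialSegments (sphere (0 : EuclideanSpace ℝ (Fin n)) 1 ∩ closedBall (-x) 1)
                    (fun _ => 1) (fun v => 1 + t * ρ v) + {x})) \
              {y : EuclideanSpace ℝ (Fin n) |
                infDist y (sphere (0 : EuclideanSpace ℝ (Fin n)) 1 ∩
                  (sphere (0 : EuclideanSpace ℝ (Fin n)) 1 + {x})) ≤ c * t} :=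
  stmt4_general n M hM x hx0 hx2
end

section
/- Let n ≥ 2, let f : S^{n−1} → ℝ be continuous, and let s ∈ (0,2). Then ∫_{S^{n−1}} (∫_{S(sv)} f(w) dH^{n−1}(w)) dH^{n−1}(v) = S(s)·∫_{S^{n−1}} f(w) dH^{n−1}(w), where S(x) = (S^{n−1} ∩ B(x,1)) ∪ (S^{n−1} ∩ B(−x,1)) and S(s) = H^{n−1}(S(sv)) (independent of the unit vector v). -/
/-!
For unit vectors `v, w` we have `‖w - s v‖² = 1 - 2 s ⟪v, w⟫ + s² = ‖v - s w‖²`, so the relation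
`w ∈ S(s v)` is symmetric in `v` and `w`. By Fubini the left-hand side is therefore
`∫ H^{n-1}(S(s w)) f(w) dw`, and `H^{n-1}(S(s w))` does not depend on `w`: a reflection maps `w`
to `v₀` and preserves the sphere, the balls and Hausdorff measure. Fubini applies because
`H^{n-1}(S^{n-1}) < ∞`, the sphere being covered by the images of two compact sets under the
(smooth, hence locally Lipschitz) inverse stereographic projections from `v` and `-v`.
-/

open MeasureTheory Metric Set Module RealInnerProductSpace

theorem hausdorffMeasure_image_lt_top_of_contDiff
    {F E : Type*} [NormedAddCommGroup F] [NormedSpace ℝ F] [FiniteDimensional ℝ F]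
    [MeasurableSpace F] [BorelSpace F] [NormedAddCommGroup E] [NormedSpace ℝ E]
    [MeasurableSpace E] [BorelSpace E] {g : F → E} (hg : ContDiff ℝ 1 g) {K : Set F}
    (hK : IsCompact K) : μH[finrank ℝ F] (g '' K) < ⊤ := by
  obtain ⟨C, hC⟩ := hg.locallyLipschitz.locallyLipschitzOn.exists_lipschitzOnWith_of_compact hK
  calc μH[finrank ℝ F] (g '' K) ≤ C ^ (finrank ℝ F : ℝ) * μH[finrank ℝ F] K :=
        hC.hausdorffMeasure_image_le (Nat.cast_nonneg _)
    _ < ⊤ := ENNReal.mul_lt_top (by simp) hK.measure_lt_top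

theorem integral_setIntegral_prodMk_preimage {X Y F : Type*} [MeasurableSpace X]
    [MeasurableSpace Y] [NormedAddCommGroup F] [NormedSpace ℝ F] [CompleteSpace F]
    {μ : Measure X} [IsFiniteMeasure μ] {ν : Measure Y} [SFinite ν] {R : Set (X × Y)}
    (hR : MeasurableSet R) {f : Y → F} (hf : Integrable f ν) :
    ∫ x, ∫ y in Prod.mk x ⁻¹' R, f y ∂ν ∂μ = ∫ y, μ.real ((·, y) ⁻¹' R) • f y ∂ν := by
  have hint : Integrable (Function.uncurry fun x y => R.indicator (fun p => f p.2) (x, y))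
      (μ.prod ν) := (hf.comp_snd μ).indicator hR
  calc ∫ x, ∫ y in Prod.mk x ⁻¹' R, f y ∂ν ∂μ
      = ∫ x, ∫ y, R.indicator (fun p => f p.2) (x, y) ∂ν ∂μ := by
        congr 1 with x
        exact (integral_indicator (hR.preimage measurable_prodMk_left)).symm
    _ = ∫ y, ∫ x, R.indicator (fun p => f p.2) (x, y) ∂μ ∂ν := integral_integral_swap hint
    _ = ∫ y, μ.real ((·, y) ⁻¹' R) • f y ∂ν := by
        congr 1 with y
        exact integral_indicator_const (f y) (hR.preimage measurable_prodMk_right)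

section Stereographic

variable {E : Type*} [NormedAddCommGroup E] [InnerProductSpace ℝ E]

theorem sphere_inter_inner_nonpos_subset_image_stereoInvFunAux {v : E} (hv : ‖v‖ = 1) :
    sphere (0 : E) 1 ∩ {x | ⟪v, x⟫ ≤ 0} ⊆
      (stereoInvFunAux v ∘ (↑)) '' (stereoToFun v '' (sphere (0 : E) 1 ∩ {x | ⟪v, x⟫ ≤ 0})) := by
  rintro x ⟨hx, hvx⟩
  refine ⟨stereoToFun v x, mem_image_of_mem _ ⟨hx, hvx⟩, ?_⟩
  have hxv : x ≠ v := by
    rintro rfl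
    norm_num [hv] at hvx
  exact congrArg Subtype.val (stereo_left_inv hv (x := ⟨x, hx⟩) hxv)

variable [FiniteDimensional ℝ E]

theorem isCompact_image_stereoToFun_sphere_inter_inner_nonpos (v : E) :
    IsCompact (stereoToFun v '' (sphere (0 : E) 1 ∩ {x | ⟪v, x⟫ ≤ 0})) := by
  refine ((isCompact_sphere 0 1).inter_right (isClosed_le (by fun_prop) continuous_const))
    |>.image_of_continuousOn (continuousOn_stereoToFun.mono ?_)
  rintro x ⟨-, hx : ⟪v, x⟫ ≤ 0⟩
  change ⟪v, x⟫ ≠ 1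
  linarith

theorem hausdorffMeasure_sphere_lt_top [MeasurableSpace E] [BorelSpace E] {d : ℕ}
    (hd : finrank ℝ E = d + 1) : μH[d] (sphere (0 : E) 1) < ⊤ := by
  have : Fact (finrank ℝ E = d + 1) := ⟨hd⟩
  have hemisphere (u : E) (hu : ‖u‖ = 1) :
      μH[d] (sphere (0 : E) 1 ∩ {x | ⟪u, x⟫ ≤ 0}) < ⊤ := by
    have hdim : finrank ℝ (ℝ ∙ u)ᗮ = d :=
      Submodule.finrank_orthogonal_span_singleton (ne_zero_of_norm_ne_zero (hu ▸ one_ne_zero))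
    refine (measure_mono (sphere_inter_inner_nonpos_subset_image_stereoInvFunAux hu)).trans_lt ?_
    rw [← hdim]
    exact hausdorffMeasure_image_lt_top_of_contDiff
      (contDiff_stereoInvFunAux.comp (ℝ ∙ u)ᗮ.subtypeL.contDiff)
      (isCompact_image_stereoToFun_sphere_inter_inner_nonpos u)
  have : Nontrivial E := Module.nontrivial_of_finrank_eq_succ hd
  obtain ⟨v, hv⟩ := exists_norm_eq E zero_le_one
  have hcover : sphere (0 : E) 1 ⊆
      sphere (0 : E) 1 ∩ {x | ⟪v, x⟫ ≤ 0} ∪ sphere (0 : E) 1 ∩ {x | ⟪-v, x⟫ ≤ 0} := by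
    intro x hx
    rcases le_total ⟪v, x⟫ 0 with h | h
    · exact Or.inl ⟨hx, h⟩
    · exact Or.inr ⟨hx, by simpa [inner_neg_left] using h⟩
  exact (measure_mono hcover).trans_lt <| (measure_union_le _ _).trans_lt <|
    ENNReal.add_lt_top.2 ⟨hemisphere v hv, hemisphere (-v) (by rw [norm_neg, hv])⟩

end Stereographic

theorem hausdorffMeasure_sphere_euclideanSpace_lt_top (n : ℕ) :
    μH[(n : ℝ) - 1] (sphere (0 : EuclideanSpace ℝ (Fin n)) 1) < ⊤ := by
  cases n with
  | zero => simp [sphere_eq_empty_of_subsingleton one_ne_zero]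
  | succ m =>
    rw [Nat.cast_succ, add_sub_cancel_right]
    exact hausdorffMeasure_sphere_lt_top finrank_euclideanSpace_fin

section AntipodalCaps

variable {E : Type*} [NormedAddCommGroup E]

/-- `S(x)` in the informal statement. -/
def antipodalCaps (x : E) : Set E :=
  sphere 0 1 ∩ closedBall x 1 ∪ sphere 0 1 ∩ closedBall (-x) 1

theorem antipodalCaps_subset_sphere (x : E) : antipodalCaps x ⊆ sphere 0 1 :=
  union_subset inter_subset_left inter_subset_left

theorem isClosed_setOf_mem_antipodalCaps : IsClosed {p : E × E | p.2 ∈ antipodalCaps p.1} := by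
  simp only [antipodalCaps, mem_union, mem_inter_iff, mem_sphere_zero_iff_norm, mem_closedBall,
    ofPred_or, ofPred_and]
  exact ((isClosed_eq (by fun_prop) (by fun_prop)).inter
      (isClosed_le (by fun_prop) (by fun_prop))).union
    ((isClosed_eq (by fun_prop) (by fun_prop)).inter (isClosed_le (by fun_prop) (by fun_prop)))

theorem LinearIsometryEquiv.image_antipodalCaps {R : Type*} [Semiring R] [Module R E]
    (φ : E ≃ₗᵢ[R] E) (x : E) : φ '' antipodalCaps x = antipodalCaps (φ x) := by
  have hsphere : φ '' sphere 0 1 = sphere 0 1 := by simp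
  have hball (y : E) : φ '' closedBall y 1 = closedBall (φ y) 1 :=
    φ.toIsometryEquiv.image_closedBall y 1
  simp only [antipodalCaps, image_union, image_inter φ.injective, hsphere, hball, map_neg]

variable [InnerProductSpace ℝ E]

theorem norm_sub_smul_comm {v w : E} (h : ‖v‖ = ‖w‖) (s : ℝ) : ‖w - s • v‖ = ‖v - s • w‖ := by
  rw [← sq_eq_sq₀ (norm_nonneg _) (norm_nonneg _), norm_sub_sq_real, norm_sub_sq_real,
    inner_smul_right, inner_smul_right, norm_smul, norm_smul, real_inner_comm, h]

theorem mem_antipodalCaps_smul_comm {v w : E} (h : ‖v‖ = ‖w‖) (s : ℝ) :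
    w ∈ antipodalCaps (s • v) ↔ v ∈ antipodalCaps (s • w) := by
  simp only [antipodalCaps, mem_union, mem_inter_iff, mem_sphere_zero_iff_norm, mem_closedBall,
    dist_eq_norm, ← neg_smul, norm_sub_smul_comm h, h]

theorem sphere_inter_setOf_mem_antipodalCaps_smul {w : E} (hw : ‖w‖ = 1) (s : ℝ) :
    sphere 0 1 ∩ {v | w ∈ antipodalCaps (s • v)} = antipodalCaps (s • w) := by
  ext v
  refine ⟨fun ⟨hv, hwv⟩ => ?_, fun hv => ⟨antipodalCaps_subset_sphere _ hv, ?_⟩⟩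
  · rwa [← mem_antipodalCaps_smul_comm ((mem_sphere_zero_iff_norm.1 hv).trans hw.symm)]
  · rwa [mem_ofPred_eq, mem_antipodalCaps_smul_comm
      ((mem_sphere_zero_iff_norm.1 (antipodalCaps_subset_sphere _ hv)).trans hw.symm)]

theorem hausdorffMeasure_antipodalCaps_eq [MeasurableSpace E] [BorelSpace E] (d : ℝ)
    {x y : E} (h : ‖x‖ = ‖y‖) : μH[d] (antipodalCaps x) = μH[d] (antipodalCaps y) := by
  let φ := (ℝ ∙ (x - y))ᗮ.reflection
  rw [← Submodule.reflection_sub h, ← φ.image_antipodalCaps,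
    φ.isometry.hausdorffMeasure_image (Or.inr φ.surjective)]

theorem integral_setIntegral_antipodalCaps_smul [MeasurableSpace E] [BorelSpace E]
    [ProperSpace E] {d : ℝ} (hS : μH[d] (sphere (0 : E) 1) ≠ ⊤) {f : E → ℝ}
    (hf : ContinuousOn f (sphere 0 1)) (s : ℝ) {v₀ : E} (hv₀ : ‖v₀‖ = 1) :
    ∫ v in sphere 0 1, ∫ w in antipodalCaps (s • v), f w ∂μH[d] ∂μH[d] =
      μH[d].real (antipodalCaps (s • v₀)) * ∫ w in sphere 0 1, f w ∂μH[d] := by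
  have : IsFiniteMeasure (μH[d].restrict (sphere (0 : E) 1)) := isFiniteMeasure_restrict.2 hS
  have hfint : Integrable f (μH[d].restrict (sphere 0 1)) := by
    have := hf.integrableOn_compact (μ := μH[d].restrict (sphere 0 1)) (isCompact_sphere 0 1)
    rwa [IntegrableOn, Measure.restrict_restrict_of_subset subset_rfl] at this
  have hR : MeasurableSet {p : E × E | p.2 ∈ antipodalCaps (s • p.1)} :=
    (isClosed_setOf_mem_antipodalCaps.preimage (f := fun p : E × E => (s • p.1, p.2))
      (by fun_prop)).measurableSet
  calc ∫ v in sphere 0 1, ∫ w in antipodalCaps (s • v), f w ∂μH[d] ∂μH[d]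
      = ∫ v in sphere 0 1, ∫ w in Prod.mk v ⁻¹' {p : E × E | p.2 ∈ antipodalCaps (s • p.1)},
          f w ∂(μH[d].restrict (sphere 0 1)) ∂μH[d] := by
        congr 1 with v
        rw [Measure.restrict_restrict (hR.preimage measurable_prodMk_left)]
        exact congrArg (fun A => ∫ w in A, f w ∂μH[d])
          (inter_eq_left.2 (antipodalCaps_subset_sphere _)).symm
    _ = ∫ w in sphere 0 1, (μH[d].restrict (sphere 0 1)).real
          ((·, w) ⁻¹' {p : E × E | p.2 ∈ antipodalCaps (s • p.1)}) • f w ∂μH[d] :=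
        integral_setIntegral_prodMk_preimage hR hfint
    _ = ∫ w in sphere 0 1, μH[d].real (antipodalCaps (s • v₀)) * f w ∂μH[d] := by
        refine setIntegral_congr_fun isClosed_sphere.measurableSet fun w hw => ?_
        have hw : ‖w‖ = 1 := mem_sphere_zero_iff_norm.1 hw
        have hcaps : μH[d] (antipodalCaps (s • w)) = μH[d] (antipodalCaps (s • v₀)) :=
          hausdorffMeasure_antipodalCaps_eq d (by rw [norm_smul, norm_smul, hw, hv₀])
        rw [measureReal_restrict_apply (hR.preimage measurable_prodMk_right), inter_comm]
        change μH[d].real (sphere 0 1 ∩ {v | w ∈ antipodalCaps (s • v)}) • f w = _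
        rw [sphere_inter_setOf_mem_antipodalCaps_smul hw, measureReal_def, measureReal_def, hcaps,
          smul_eq_mul]
    _ = μH[d].real (antipodalCaps (s • v₀)) * ∫ w in sphere 0 1, f w ∂μH[d] :=
        integral_const_mul _ _

end AntipodalCaps

theorem stmt9_general (n : ℕ)
    (f : EuclideanSpace ℝ (Fin n) → ℝ)
    (hf : ContinuousOn f (sphere (0 : EuclideanSpace ℝ (Fin n)) 1))
    (s : ℝ)
    (v₀ : EuclideanSpace ℝ (Fin n)) (hv₀ : ‖v₀‖ = 1) :
    (∫ v in sphere (0 : EuclideanSpace ℝ (Fin n)) 1,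
        (∫ w in ((sphere (0 : EuclideanSpace ℝ (Fin n)) 1 ∩ closedBall (s • v) 1) ∪
            (sphere (0 : EuclideanSpace ℝ (Fin n)) 1 ∩ closedBall (-(s • v)) 1)),
          f w ∂(μH[(n : ℝ) - 1])) ∂(μH[(n : ℝ) - 1]))
      = (μH[(n : ℝ) - 1] ((sphere (0 : EuclideanSpace ℝ (Fin n)) 1 ∩ closedBall (s • v₀) 1) ∪
            (sphere (0 : EuclideanSpace ℝ (Fin n)) 1 ∩ closedBall (-(s • v₀)) 1))).toReal *
        ∫ w in sphere (0 : EuclideanSpace ℝ (Fin n)) 1, f w ∂(μH[(n : ℝ) - 1]) :=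
  integral_setIntegral_antipodalCaps_smul
    (hausdorffMeasure_sphere_euclideanSpace_lt_top n).ne hf s hv₀

/-- Let `n ≥ 2`, `f : S^{n−1} → ℝ` continuous and `s ∈ (0,2)`.
Then `∫_{S^{n−1}} (∫_{S(sv)} f dH^{n−1}) dH^{n−1}(v) = S(s)·∫_{S^{n−1}} f dH^{n−1}`,
where `S(x) = (S^{n−1} ∩ B(x,1)) ∪ (S^{n−1} ∩ B(−x,1))` and
`S(s) = H^{n−1}(S(s·v₀))` for any unit vector `v₀` (it is independent of `v₀`). -/
theorem stmt9 (n : ℕ) (hn : 2 ≤ n)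
    (f : EuclideanSpace ℝ (Fin n) → ℝ)
    (hf : ContinuousOn f (sphere (0 : EuclideanSpace ℝ (Fin n)) 1))
    (s : ℝ) (hs : s ∈ Set.Ioo (0 : ℝ) 2)
    (v₀ : EuclideanSpace ℝ (Fin n)) (hv₀ : ‖v₀‖ = 1) :
    (∫ v in sphere (0 : EuclideanSpace ℝ (Fin n)) 1,
        (∫ w in ((sphere (0 : EuclideanSpace ℝ (Fin n)) 1 ∩ closedBall (s • v) 1) ∪
            (sphere (0 : EuclideanSpace ℝ (Fin n)) 1 ∩ closedBall (-(s • v)) 1)),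
          f w ∂(μH[(n : ℝ) - 1])) ∂(μH[(n : ℝ) - 1]))
      = (μH[(n : ℝ) - 1] ((sphere (0 : EuclideanSpace ℝ (Fin n)) 1 ∩ closedBall (s • v₀) 1) ∪
            (sphere (0 : EuclideanSpace ℝ (Fin n)) 1 ∩ closedBall (-(s • v₀)) 1))).toReal *
        ∫ w in sphere (0 : EuclideanSpace ℝ (Fin n)) 1, f w ∂(μH[(n : ℝ) - 1]) :=
  stmt9_general n f hf s v₀ hv₀
end

section
/- For every α₀ ∈ (0, π/2) there exists m ∈ ℕ, m ≥ 1, such that F_m(α₀) > 0, where F_m(α) = (1/sin²α)·( (1/2)cos 2α + (1/2)cos(4αm) + 1/(8m² sin²α) − cos(4αm)/(8m² sin²α) − sin(4αm)/(2m·tan α) ). -/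
open Real

set_option maxHeartbeats 1600000 in
/-- For every `α₀ ∈ (0,π/2)` there exists `m ≥ 1` such that
`F_m(α₀) > 0`, where
`F_m(α) = (1/sin²α)·((1/2)cos 2α + (1/2)cos 4αm + 1/(8m²sin²α)
  − cos(4αm)/(8m²sin²α) − sin(4αm)/(2m tan α))`. -/
theorem stmt13 (α₀ : ℝ) (hα₀ : α₀ ∈ Set.Ioo (0 : ℝ) (π / 2)) :
    ∃ m : ℕ, 1 ≤ m ∧
      0 < (1 / Real.sin α₀ ^ 2) *
        ((1 / 2) * Real.cos (2 * α₀) + (1 / 2) * Real.cos (4 * α₀ * m)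
          + 1 / (8 * m ^ 2 * Real.sin α₀ ^ 2)
          - Real.cos (4 * α₀ * m) / (8 * m ^ 2 * Real.sin α₀ ^ 2)
          - Real.sin (4 * α₀ * m) / (2 * m * Real.tan α₀)) := by
  obtain ⟨h0, h2⟩ := hα₀
  have hπ : (0:ℝ) < π := Real.pi_pos
  set s := Real.sin α₀ with hs_def
  set c := Real.cos α₀ with hc_def
  have hs : 0 < s := Real.sin_pos_of_pos_of_lt_pi h0 (lt_trans h2 (by linarith))
  have hc : 0 < c := Real.cos_pos_of_mem_Ioo ⟨by linarith, h2⟩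
  have hs1 : s ≤ 1 := Real.sin_le_one α₀
  have hc1 : c ≤ 1 := Real.cos_le_one α₀
  set δ : ℝ := s * c / (4 * π) with hδ_def
  have hδ : 0 < δ := by positivity
  obtain ⟨n, hn⟩ := exists_nat_gt (1 / δ)
  have hnpos : 0 < n + 1 := Nat.succ_pos n
  obtain ⟨j, k, hk0, hk1, hjk⟩ :=
    Real.exists_int_int_abs_mul_sub_le (2 * α₀ / π) hnpos
  refine ⟨k.toNat, by omega, ?_⟩
  have hM : ((k.toNat : ℕ) : ℝ) = (k : ℝ) := by
    exact_mod_cast Int.toNat_of_nonneg hk0.le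
  rw [hM]
  set M : ℝ := (k : ℝ) with hM_def
  have hM1 : 1 ≤ M := by
    have h1k : (1:ℤ) ≤ k := hk0
    rw [hM_def]
    exact_mod_cast h1k
  have hMpos : 0 < M := lt_of_lt_of_le one_pos hM1
  set v : ℝ := Real.sin (2 * M * α₀) with hv_def
  set w : ℝ := Real.cos (2 * M * α₀) with hw_def
  have hjk' : |M * (2 * α₀ / π) - j| ≤ 1 / ((n:ℝ) + 2) := by
    have : ((n + 1 : ℕ) : ℝ) + 1 = (n:ℝ) + 2 := by push_cast; ring
    rw [this] at hjk
    exact hjk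
  have hvbound : |v| ≤ s * c / 4 := by
    have hrw : 2 * M * α₀ = (M * (2 * α₀ / π) - j) * π + j * π := by
      field_simp
      ring
    have habs : |v| = |Real.sin ((M * (2 * α₀ / π) - j) * π)| := by
      rw [hv_def, hrw, Real.sin_add_int_mul_pi, abs_mul]
      have hone : |((-1:ℝ)) ^ j| = 1 := by
        rcases Int.even_or_odd j with he | ho
        · rw [he.neg_one_zpow]; exact abs_one
        · rw [ho.neg_one_zpow]; rw [abs_neg]; exact abs_one
      rw [hone, one_mul]
    rw [habs]
    calc |Real.sin ((M * (2 * α₀ / π) - j) * π)| ≤ |(M * (2 * α₀ / π) - j) * π| :=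
          Real.abs_sin_le_abs
      _ = |M * (2 * α₀ / π) - j| * π := by rw [abs_mul, abs_of_pos hπ]
      _ ≤ (1 / ((n:ℝ) + 2)) * π := mul_le_mul_of_nonneg_right hjk' hπ.le
      _ ≤ δ * π := by
          apply mul_le_mul_of_nonneg_right _ hπ.le
          rw [div_le_iff₀ (by positivity)]
          rw [div_lt_iff₀ hδ] at hn
          nlinarith [Nat.cast_nonneg (α := ℝ) n]
      _ = s * c / 4 := by rw [hδ_def]; field_simp
  have hw2 : w ^ 2 = 1 - v ^ 2 := by
    have := Real.sin_sq_add_cos_sq (2 * M * α₀)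
    rw [← hv_def, ← hw_def] at this
    linarith
  have h4c : Real.cos (4 * α₀ * M) = 2 * w ^ 2 - 1 := by
    have h : 4 * α₀ * M = 2 * (2 * M * α₀) := by ring
    rw [h, Real.cos_two_mul]
  have h4s : Real.sin (4 * α₀ * M) = 2 * v * w := by
    have h : 4 * α₀ * M = 2 * (2 * M * α₀) := by ring
    rw [h, Real.sin_two_mul]
  have h2c : Real.cos (2 * α₀) = 2 * c ^ 2 - 1 := Real.cos_two_mul α₀
  have htan : Real.tan α₀ = s / c := Real.tan_eq_sin_div_cos α₀
  rw [h4c, h4s, h2c, htan]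
  have hs' : s ≠ 0 := hs.ne'
  have hc' : c ≠ 0 := hc.ne'
  have hM' : M ≠ 0 := hMpos.ne'
  set u : ℝ := v / (2 * M * s) with hu_def
  have hdd : 2 * v * w / (2 * M * (s / c)) = 2 * v * w * c / (2 * M * s) := by
    field_simp
  have hkey : (1 / 2) * (2 * c ^ 2 - 1) + (1 / 2) * (2 * w ^ 2 - 1)
      + 1 / (8 * M ^ 2 * s ^ 2) - (2 * w ^ 2 - 1) / (8 * M ^ 2 * s ^ 2)
      - 2 * v * w / (2 * M * (s / c))
      = (c - u * w) ^ 2 - v ^ 2 * (1 - u ^ 2) := by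
    rw [hdd, hu_def]
    linear_combination (1 - (1 + v ^ 2) / (4 * M ^ 2 * s ^ 2)) * hw2
  rw [hkey]
  have hu_le : |u| ≤ c / 8 := by
    have h2Ms : (0:ℝ) < 2 * M * s := by positivity
    rw [hu_def, abs_div, abs_of_pos h2Ms, div_le_iff₀ h2Ms]
    nlinarith [hvbound, abs_nonneg v, mul_le_mul_of_nonneg_left hM1 (le_of_lt (mul_pos hs hc))]
  have hwle : |w| ≤ 1 := Real.abs_cos_le_one _
  have habsuw : |u * w| ≤ c / 8 := by
    rw [abs_mul]
    calc |u| * |w| ≤ (c / 8) * 1 :=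
          mul_le_mul hu_le hwle (abs_nonneg _) (by positivity)
      _ = c / 8 := mul_one _
  have h2' : 7 * c / 8 ≤ c - u * w := by
    nlinarith [le_abs_self (u * w), neg_abs_le (u * w)]
  have hv2 : v ^ 2 ≤ c ^ 2 / 16 := by
    have h3 : |v| ^ 2 ≤ (s * c / 4) ^ 2 :=
      pow_le_pow_left₀ (abs_nonneg v) hvbound 2
    rw [sq_abs] at h3
    have hs2 : 0 ≤ 1 - s ^ 2 := by nlinarith
    nlinarith [mul_nonneg hs2 (sq_nonneg c)]
  have hu2 : u ^ 2 ≤ 1 := by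
    have h4 : |u| ^ 2 ≤ (c / 8) ^ 2 := pow_le_pow_left₀ (abs_nonneg u) hu_le 2
    rw [sq_abs] at h4
    nlinarith
  have hpos : 0 < (c - u * w) ^ 2 - v ^ 2 * (1 - u ^ 2) := by
    nlinarith [sq_nonneg u]
  have hfrac : 0 < 1 / s ^ 2 := by positivity
  exact mul_pos hfrac hpos
end

section
/- Let ρ : ℝ → [0,∞) be a C², 2π-periodic function. Then 3·∫₀^{2π} ((ρ(v) + ρ(v+π))/2)² dv − (2/π)·(∫₀^{2π} ρ(v) dv)² − ∫₀^{2π} ρ'(v)² dv + ∫₀^{2π} ρ(v)² dv ≤ 0. Equality holds if and only if ρ(v) = a + b·cos v + c·sin v + d·cos 2v + e·sin 2v for some constants a, b, c, d, e. -/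
/-!
Expand `ρ` in its Fourier series `ρ ~ ∑ cₙ e^{inv}`. Parseval turns each term of the left-hand side
into a weighted sum of `|cₙ|²`: `ρ'` has coefficients `i n cₙ`, averaging `ρ` with its shift by the
half period `π` keeps exactly the even `n`, and `∫ ρ = 2π c₀`. The left-hand side becomes
`-2π ∑ (n² - 1 - 3·[n even] + 4·[n = 0]) |cₙ|²`, and this weight is `0` for `|n| ≤ 2` and positive
otherwise. Equality therefore forces `cₙ = 0` for `|n| > 2`, and a continuous periodic function
with finitely many nonzero Fourier coefficients is the sum of its Fourier series.
-/

open Real intervalIntegral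
open MeasureTheory Complex

section FourierCoeffOn

variable {a b : ℝ} (hab : a < b)

theorem fourierCoeffOn_add {E : Type*} [NormedAddCommGroup E] [NormedSpace ℂ E] {f g : ℝ → E}
    (hf : IntervalIntegrable f volume a b) (hg : IntervalIntegrable g volume a b) (n : ℤ) :
    fourierCoeffOn hab (fun x => f x + g x) n
      = fourierCoeffOn hab f n + fourierCoeffOn hab g n := by
  have hfourier : ContinuousOn (fun x : ℝ => fourier (-n) (x : AddCircle (b - a))) (Set.uIcc a b) :=
    ((map_continuous _).comp (AddCircle.continuous_mk' _)).continuousOn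
  simp only [fourierCoeffOn_eq_integral, smul_add,
    integral_add (hf.continuousOn_smul hfourier) (hg.continuousOn_smul hfourier)]

theorem Function.Periodic.fourierCoeffOn_comp_add_right {E : Type*} [NormedAddCommGroup E]
    [NormedSpace ℂ E] {f : ℝ → E} (hf : Function.Periodic f (b - a)) (s : ℝ) (n : ℤ) :
    fourierCoeffOn hab (fun x => f (x + s)) n
      = fourier n (s : AddCircle (b - a)) • fourierCoeffOn hab f n := by
  set g : ℝ → E := fun x => fourier (-n) (x : AddCircle (b - a)) • f x
  have hg : Function.Periodic g (b - a) := fun x => by simp only [g, hf x, AddCircle.coe_add_period]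
  have hshift (x : ℝ) : fourier (-n) (x : AddCircle (b - a)) • f (x + s)
      = fourier n (s : AddCircle (b - a)) • g (x + s) := by
    simp only [g, smul_smul, fourier_coe_apply, ← Complex.exp_add]
    congr 2
    push_cast
    ring
  simp only [fourierCoeffOn_eq_integral, hshift, intervalIntegral.integral_smul,
    intervalIntegral.integral_comp_add_right, smul_comm (fourier n (s : AddCircle (b - a)))]
  congr 2
  have := hg.intervalIntegral_add_eq (a + s) a
  rwa [show a + s + (b - a) = b + s by ring, add_sub_cancel] at this

theorem fourier_coe_half_period {T : ℝ} (hT : T ≠ 0) (n : ℤ) :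
    fourier n ((T / 2 : ℝ) : AddCircle T) = (-1) ^ n := by
  have : (T : ℂ) ≠ 0 := by exact_mod_cast hT
  rw [fourier_coe_apply, ← exp_pi_mul_I, ← exp_int_mul]
  congr 1
  push_cast
  field_simp

theorem Function.Periodic.fourierCoeffOn_half_period_average {f : ℝ → ℂ}
    (hf : Function.Periodic f (b - a)) (hc : Continuous f) (n : ℤ) :
    fourierCoeffOn hab (fun x => (f x + f (x + (b - a) / 2)) / 2) n
      = if Even n then fourierCoeffOn hab f n else 0 := by
  simp only [div_eq_inv_mul (_ + _), fourierCoeffOn.const_mul]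
  rw [fourierCoeffOn_add hab (g := fun x => f (x + (b - a) / 2)) (hc.intervalIntegrable a b)
      ((hc.comp (continuous_add_const _)).intervalIntegrable a b),
    hf.fourierCoeffOn_comp_add_right, fourier_coe_half_period (sub_pos.2 hab).ne', smul_eq_mul]
  rcases Int.even_or_odd n with hn | hn
  · rw [hn.neg_one_zpow, if_pos hn]
    ring
  · rw [hn.neg_one_zpow, if_neg (Int.not_even_iff_odd.2 hn)]
    ring

theorem Function.Periodic.fourierCoeffOn_deriv {f f' : ℝ → ℂ} (hf : Function.Periodic f (b - a))
    (hd : ∀ x, HasDerivAt f (f' x) x) (hf' : IntervalIntegrable f' volume a b) (n : ℤ) :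
    fourierCoeffOn hab f' n = 2 * π * I * n / (b - a) * fourierCoeffOn hab f n := by
  have hfab : f b = f a := by simpa using hf a
  rcases eq_or_ne n 0 with rfl | hn
  · simp [fourierCoeffOn_eq_integral, integral_eq_sub_of_hasDerivAt (fun x _ => hd x) hf', hfab]
  · rw [fourierCoeffOn_of_hasDerivAt hab hn (fun x _ => hd x) hf', hfab, sub_self, mul_zero,
      zero_sub]
    have : (b - a : ℂ) ≠ 0 := by exact_mod_cast (sub_pos.2 hab).ne'
    field_simp [hn, pi_ne_zero, I_ne_zero]

theorem fourierCoeffOn_zero_ofReal (f : ℝ → ℝ) :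
    fourierCoeffOn hab (fun x => (f x : ℂ)) 0 = (((b - a)⁻¹ * ∫ x in a..b, f x : ℝ) : ℂ) := by
  simp [fourierCoeffOn_eq_integral, integral_ofReal]

theorem hasSum_sq_fourierCoeffOn_ofReal {f : ℝ → ℝ} (hf : ContinuousOn f (Set.Icc a b)) :
    HasSum (fun n => ‖fourierCoeffOn hab (fun x => (f x : ℂ)) n‖ ^ 2)
      ((b - a)⁻¹ * ∫ x in a..b, f x ^ 2) := by
  have hfC : ContinuousOn (fun x => (f x : ℂ)) (Set.Icc a b) :=
    continuous_ofReal.comp_continuousOn hf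
  have hL2 : MemLp (fun x => (f x : ℂ)) 2 (volume.restrict (Set.Icc a b)) :=
    (memLp_two_iff_integrable_sq_norm (hfC.aestronglyMeasurable measurableSet_Icc)).2
      ((hfC.norm.pow 2).integrableOn_compact isCompact_Icc)
  simpa [norm_real, sq_abs] using
    hasSum_sq_fourierCoeffOn hab
      (hL2.mono_measure (Measure.restrict_mono Set.Ioc_subset_Icc_self le_rfl))

theorem Function.Periodic.liftIoc_eq_lift {B : Type*} {T : ℝ} [Fact (0 < T)] {f : ℝ → B}
    (hf : Function.Periodic f T) (a : ℝ) : AddCircle.liftIoc T a f = hf.lift := by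
  ext y
  conv_rhs => rw [← AddCircle.coe_equivIoc (a := a) (y := y)]
  rfl

theorem Function.Periodic.eq_sum_fourier_of_fourierCoeffOn_eq_zero {f : ℝ → ℂ}
    (hf : Function.Periodic f (b - a)) (hc : Continuous f) {s : Finset ℤ}
    (hs : ∀ n ∉ s, fourierCoeffOn hab f n = 0) (x : ℝ) :
    f x = ∑ n ∈ s, fourierCoeffOn hab f n * fourier n (x : AddCircle (b - a)) := by
  have : Fact (0 < b - a) := ⟨sub_pos.2 hab⟩
  let F : C(AddCircle (b - a), ℂ) :=
    ⟨hf.lift, (QuotientAddGroup.isQuotientMap_mk _).continuous_iff.2 hc⟩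
  have hF : fourierCoeff F = fourierCoeffOn hab f := by
    ext n
    exact congrArg (fourierCoeff · n) (hf.liftIoc_eq_lift a).symm
  have hsum := has_pointwise_sum_fourier_series_of_summable
    (hF ▸ summable_of_ne_finset_zero hs) (x : AddCircle (b - a))
  rw [hF] at hsum
  exact hsum.unique (hasSum_sum_of_ne_finset_zero fun n hn => by simp [hs n hn])

theorem fourierCoeffOn_sum_fourier (z : ℤ → ℂ) (s : Finset ℤ) (n : ℤ) :
    fourierCoeffOn hab (fun x : ℝ => ∑ j ∈ s, z j * fourier j (x : AddCircle (b - a))) n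
      = if n ∈ s then z n else 0 := by
  have : Fact (0 < b - a) := ⟨sub_pos.2 hab⟩
  have hper : Function.Periodic (fun x : ℝ => ∑ j ∈ s, z j * fourier j (x : AddCircle (b - a)))
      (b - a) := fun x => by simp only [AddCircle.coe_add_period]
  have hlift : hper.lift = ∑ j ∈ s, z j • ⇑(fourier j) := by
    ext y
    induction y using QuotientAddGroup.induction_on
    simp
  show fourierCoeff (AddCircle.liftIoc (b - a) a _) n = _
  rw [hper.liftIoc_eq_lift, hlift, fourierCoeff.sum _ _ fun j _ => ?_]
  · simp [fourierCoeff.const_smul, fourierCoeff_fourier, Pi.single_apply]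
  · exact ((map_continuous (fourier j)).integrable_of_hasCompactSupport
      (HasCompactSupport.of_compactSpace _)).smul (z j)

theorem Function.Periodic.exists_eq_sum_fourier_iff {f : ℝ → ℂ}
    (hf : Function.Periodic f (b - a)) (hc : Continuous f) (s : Finset ℤ) :
    (∃ z : ℤ → ℂ, ∀ x : ℝ, f x = ∑ n ∈ s, z n * fourier n (x : AddCircle (b - a)))
      ↔ ∀ n ∉ s, fourierCoeffOn hab f n = 0 := by
  constructor
  · rintro ⟨z, hz⟩ n hn
    rw [show f = _ from funext hz, fourierCoeffOn_sum_fourier, if_neg hn]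
  · exact fun hs => ⟨_, hf.eq_sum_fourier_of_fourierCoeffOn_eq_zero hab hc hs⟩

end FourierCoeffOn

theorem fourier_coe_two_pi (n : ℤ) (x : ℝ) :
    fourier n (x : AddCircle (2 * π)) = Real.cos (n * x) + Real.sin (n * x) * I := by
  rw [fourier_coe_apply, show 2 * π * I * n * x / (2 * π : ℝ) = ((n * x : ℝ) : ℂ) * I by
    push_cast; field_simp [pi_ne_zero], exp_mul_I, ← ofReal_cos, ← ofReal_sin]

theorem re_mul_cos_add_sin_mul_I (z : ℂ) (θ : ℝ) :
    (z * (Real.cos θ + Real.sin θ * I)).re = z.re * Real.cos θ - z.im * Real.sin θ := by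
  simp only [mul_re, add_re, add_im, ofReal_re, ofReal_im, mul_im, I_re, I_im]
  ring

theorem Finset.sum_Icc_neg_two_two {M : Type*} [AddCommMonoid M] (F : ℤ → M) :
    ∑ n ∈ Finset.Icc (-2) 2, F n = F (-2) + (F (-1) + (F 0 + (F 1 + F 2))) := by
  simp [show Finset.Icc (-2 : ℤ) 2 = {-2, -1, 0, 1, 2} from rfl]

theorem exists_ofReal_eq_sum_fourier_Icc_two_iff (ρ : ℝ → ℝ) :
    (∃ z : ℤ → ℂ, ∀ x : ℝ,
        (ρ x : ℂ) = ∑ n ∈ Finset.Icc (-2) 2, z n * fourier n (x : AddCircle (2 * π)))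
      ↔ ∃ a b c d e : ℝ, ∀ v, ρ v = a + b * Real.cos v + c * Real.sin v
            + d * Real.cos (2 * v) + e * Real.sin (2 * v) := by
  constructor
  · rintro ⟨z, hz⟩
    refine ⟨(z 0).re, (z 1).re + (z (-1)).re, (z (-1)).im - (z 1).im,
      (z 2).re + (z (-2)).re, (z (-2)).im - (z 2).im, fun v => ?_⟩
    have hv := congrArg Complex.re (hz v)
    simp only [Finset.sum_Icc_neg_two_two, fourier_coe_two_pi, re_mul_cos_add_sin_mul_I, add_re,
      ofReal_re] at hv
    simp only [Int.cast_neg, Int.cast_ofNat, Int.cast_one, Int.cast_zero, neg_mul, one_mul,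
      zero_mul, Real.cos_neg, Real.sin_neg, Real.cos_zero, Real.sin_zero] at hv
    rw [hv]
    ring
  · rintro ⟨a, b, c, d, e, h⟩
    refine ⟨fun n => if n = 0 then a else if n = 1 then (b - c * I) / 2 else
      if n = -1 then (b + c * I) / 2 else if n = 2 then (d - e * I) / 2 else (d + e * I) / 2,
      fun v => ?_⟩
    simp only [Finset.sum_Icc_neg_two_two, fourier_coe_two_pi, h]
    norm_num only [Int.cast_neg, Int.cast_ofNat, Int.cast_one, Int.cast_zero, neg_mul, one_mul,
      zero_mul, Real.cos_neg, Real.sin_neg, Real.cos_zero, Real.sin_zero]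
    push_cast
    linear_combination (c * Complex.sin v + e * Complex.sin (2 * v)) * I_sq

noncomputable def defect (ρ : ℝ → ℝ) : ℝ :=
  3 * (∫ v in (0:ℝ)..(2 * π), ((ρ v + ρ (v + π)) / 2) ^ 2)
    - (2 / π) * (∫ v in (0:ℝ)..(2 * π), ρ v) ^ 2
    - (∫ v in (0:ℝ)..(2 * π), (deriv ρ v) ^ 2)
    + (∫ v in (0:ℝ)..(2 * π), (ρ v) ^ 2)

noncomputable def defectMultiplier (n : ℤ) : ℝ :=
  n ^ 2 - 1 - 3 * (if Even n then 1 else 0) + if n = 0 then 4 else 0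

theorem defectMultiplier_eq_zero_of_mem {n : ℤ} (hn : n ∈ Finset.Icc (-2) 2) :
    defectMultiplier n = 0 := by
  obtain ⟨h₁, h₂⟩ := Finset.mem_Icc.1 hn
  interval_cases n <;> norm_num [defectMultiplier, Int.even_iff]

theorem defectMultiplier_pos_of_not_mem {n : ℤ} (hn : n ∉ Finset.Icc (-2) 2) :
    0 < defectMultiplier n := by
  rw [Finset.mem_Icc, not_and_or, not_le, not_le] at hn
  have h9 : (9 : ℝ) ≤ n ^ 2 := by
    have : 9 ≤ n ^ 2 := by rcases hn with hn | hn <;> nlinarith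
    exact_mod_cast this
  have hn0 : n ≠ 0 := by omega
  simp only [defectMultiplier, if_neg hn0]
  split_ifs <;> linarith

theorem defectMultiplier_nonneg (n : ℤ) : 0 ≤ defectMultiplier n := by
  by_cases hn : n ∈ Finset.Icc (-2) 2
  · exact (defectMultiplier_eq_zero_of_mem hn).ge
  · exact (defectMultiplier_pos_of_not_mem hn).le

theorem defectMultiplier_eq_zero_iff {n : ℤ} : defectMultiplier n = 0 ↔ n ∈ Finset.Icc (-2) 2 :=
  ⟨fun h => by_contra fun hn => (defectMultiplier_pos_of_not_mem hn).ne' h,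
    defectMultiplier_eq_zero_of_mem⟩

theorem neg_defect_div_two_pi (ρ : ℝ → ℝ) :
    -defect ρ / (2 * π) = (2 * π)⁻¹ * (∫ x in (0:ℝ)..2 * π, deriv ρ x ^ 2)
      - (2 * π)⁻¹ * (∫ x in (0:ℝ)..2 * π, ρ x ^ 2)
      - 3 * ((2 * π)⁻¹ * ∫ x in (0:ℝ)..2 * π, ((ρ x + ρ (x + π)) / 2) ^ 2)
      + 4 * ((2 * π)⁻¹ * ∫ x in (0:ℝ)..2 * π, ρ x) ^ 2 := by
  rw [defect]
  field_simp
  ring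

section TwoPiPeriodic

variable {ρ : ℝ → ℝ}

theorem norm_sq_fourierCoeffOn_deriv (hρ : ContDiff ℝ 1 ρ) (hper : Function.Periodic ρ (2 * π))
    (n : ℤ) :
    ‖fourierCoeffOn two_pi_pos (fun x => ((deriv ρ x : ℝ) : ℂ)) n‖ ^ 2
      = n ^ 2 * ‖fourierCoeffOn two_pi_pos (fun x => (ρ x : ℂ)) n‖ ^ 2 := by
  -- coefficients on `[0, 2π]` live on the circle `AddCircle (2 * π - 0)`
  have hperC : Function.Periodic (fun x => (ρ x : ℂ)) (2 * π - 0) := by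
    rw [sub_zero]; exact hper.comp ((↑) : ℝ → ℂ)
  have hcoeff : fourierCoeffOn two_pi_pos (fun x => ((deriv ρ x : ℝ) : ℂ)) n
      = I * n * fourierCoeffOn two_pi_pos (fun x => (ρ x : ℂ)) n := by
    rw [hperC.fourierCoeffOn_deriv two_pi_pos
      (fun x => (hρ.differentiable one_ne_zero x).hasDerivAt.ofReal_comp)
      ((continuous_ofReal.comp (hρ.continuous_deriv le_rfl)).intervalIntegrable _ _)]
    field_simp [pi_ne_zero]
    push_cast
    ring
  rw [hcoeff, norm_mul, norm_mul, norm_I, one_mul, mul_pow, norm_intCast, sq_abs]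

theorem norm_sq_fourierCoeffOn_half_period_average (hρ : Continuous ρ)
    (hper : Function.Periodic ρ (2 * π)) (n : ℤ) :
    ‖fourierCoeffOn two_pi_pos (fun x => (((ρ x + ρ (x + π)) / 2 : ℝ) : ℂ)) n‖ ^ 2
      = (if Even n then 1 else 0) * ‖fourierCoeffOn two_pi_pos (fun x => (ρ x : ℂ)) n‖ ^ 2 := by
  have hperC : Function.Periodic (fun x => (ρ x : ℂ)) (2 * π - 0) := by
    rw [sub_zero]; exact hper.comp ((↑) : ℝ → ℂ)
  have hcoeff : fourierCoeffOn two_pi_pos (fun x => (((ρ x + ρ (x + π)) / 2 : ℝ) : ℂ)) n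
      = if Even n then fourierCoeffOn two_pi_pos (fun x => (ρ x : ℂ)) n else 0 := by
    rw [← hperC.fourierCoeffOn_half_period_average two_pi_pos (continuous_ofReal.comp hρ)]
    congr! 3 with x
    push_cast
    ring_nf
  rw [hcoeff]
  split_ifs <;> simp

theorem hasSum_defectMultiplier_mul_sq (hρ : ContDiff ℝ 1 ρ)
    (hper : Function.Periodic ρ (2 * π)) :
    HasSum (fun n => defectMultiplier n * ‖fourierCoeffOn two_pi_pos (fun x => (ρ x : ℂ)) n‖ ^ 2)
      (-defect ρ / (2 * π)) := by
  set c := fourierCoeffOn two_pi_pos (fun x => (ρ x : ℂ))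
  have hmean : ‖c 0‖ ^ 2 = ((2 * π)⁻¹ * ∫ x in (0:ℝ)..2 * π, ρ x) ^ 2 := by
    simp only [c, fourierCoeffOn_zero_ofReal, sub_zero, norm_real, Real.norm_eq_abs, sq_abs]
  have hP : HasSum (fun n => ‖c n‖ ^ 2) _ :=
    hasSum_sq_fourierCoeffOn_ofReal two_pi_pos hρ.continuous.continuousOn
  have hQ := hasSum_sq_fourierCoeffOn_ofReal two_pi_pos (hρ.continuous_deriv le_rfl).continuousOn
  have hR := hasSum_sq_fourierCoeffOn_ofReal two_pi_pos
    (f := fun x => (ρ x + ρ (x + π)) / 2) (by have := hρ.continuous; fun_prop)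
  simp only [norm_sq_fourierCoeffOn_deriv hρ hper,
    norm_sq_fourierCoeffOn_half_period_average hρ.continuous hper, sub_zero] at hQ hR hP
  rw [neg_defect_div_two_pi, ← hmean]
  refine (((hQ.sub hP).sub (hR.mul_left 3)).add (hasSum_ite_eq 0 _)).congr_fun fun n => ?_
  rcases eq_or_ne n 0 with rfl | hn
  · norm_num [defectMultiplier]
    ring
  · simp only [defectMultiplier, if_neg hn]
    split_ifs <;> ring

theorem defect_nonpos (hρ : ContDiff ℝ 1 ρ) (hper : Function.Periodic ρ (2 * π)) :
    defect ρ ≤ 0 := by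
  have := (hasSum_defectMultiplier_mul_sq hρ hper).nonneg
    fun n => mul_nonneg (defectMultiplier_nonneg n) (sq_nonneg _)
  rwa [neg_div, neg_nonneg, div_le_iff₀ two_pi_pos, zero_mul] at this

theorem defect_eq_zero_iff (hρ : ContDiff ℝ 1 ρ) (hper : Function.Periodic ρ (2 * π)) :
    defect ρ = 0
      ↔ ∀ n ∉ Finset.Icc (-2) 2, fourierCoeffOn two_pi_pos (fun x => (ρ x : ℂ)) n = 0 := by
  have hsum := hasSum_defectMultiplier_mul_sq hρ hper
  have hnonneg (n : ℤ) := mul_nonneg (defectMultiplier_nonneg n)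
    (sq_nonneg ‖fourierCoeffOn two_pi_pos (fun x => (ρ x : ℂ)) n‖)
  calc defect ρ = 0 ↔ -defect ρ / (2 * π) = 0 := by simp [pi_ne_zero]
    _ ↔ HasSum _ 0 := ⟨fun h => by rwa [h] at hsum, hsum.unique⟩
    _ ↔ ∀ n, _ = 0 := (hasSum_zero_iff_of_nonneg hnonneg).trans funext_iff
    _ ↔ _ := forall_congr' fun n => by
      simp [defectMultiplier_eq_zero_iff, or_iff_not_imp_left]

end TwoPiPeriodic

theorem stmt18_general (ρ : ℝ → ℝ) (hρsmooth : ContDiff ℝ 2 ρ)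
    (hρper : Function.Periodic ρ (2 * π)) :
    3 * (∫ v in (0:ℝ)..(2 * π), ((ρ v + ρ (v + π)) / 2) ^ 2)
      - (2 / π) * (∫ v in (0:ℝ)..(2 * π), ρ v) ^ 2
      - (∫ v in (0:ℝ)..(2 * π), (deriv ρ v) ^ 2)
      + (∫ v in (0:ℝ)..(2 * π), (ρ v) ^ 2) ≤ 0
    ∧
    (3 * (∫ v in (0:ℝ)..(2 * π), ((ρ v + ρ (v + π)) / 2) ^ 2)
      - (2 / π) * (∫ v in (0:ℝ)..(2 * π), ρ v) ^ 2
      - (∫ v in (0:ℝ)..(2 * π), (deriv ρ v) ^ 2)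
      + (∫ v in (0:ℝ)..(2 * π), (ρ v) ^ 2) = 0
      ↔ ∃ a b c d e : ℝ, ∀ v : ℝ,
          ρ v = a + b * Real.cos v + c * Real.sin v
            + d * Real.cos (2 * v) + e * Real.sin (2 * v)) := by
  have hρ : ContDiff ℝ 1 ρ := hρsmooth.of_le one_le_two
  have hperC : Function.Periodic (fun x => (ρ x : ℂ)) (2 * π - 0) := by
    rw [sub_zero]; exact hρper.comp ((↑) : ℝ → ℂ)
  refine ⟨defect_nonpos hρ hρper, (defect_eq_zero_iff hρ hρper).trans ?_⟩
  rw [← exists_ofReal_eq_sum_fourier_Icc_two_iff,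
    ← hperC.exists_eq_sum_fourier_iff two_pi_pos (continuous_ofReal.comp hρ.continuous), sub_zero]

/-- Let `ρ : ℝ → [0,∞)` be `C²` and 2π-periodic.  Then
`3·∫₀^{2π} ((ρ(v)+ρ(v+π))/2)² dv − (2/π)·(∫₀^{2π} ρ)² − ∫₀^{2π} ρ'(v)² dv
  + ∫₀^{2π} ρ(v)² dv ≤ 0`,
with equality iff `ρ(v) = a + b cos v + c sin v + d cos 2v + e sin 2v` for some
constants `a, b, c, d, e`. -/
theorem stmt18 (ρ : ℝ → ℝ) (hρsmooth : ContDiff ℝ 2 ρ) (hρnonneg : ∀ v, 0 ≤ ρ v)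
    (hρper : Function.Periodic ρ (2 * π)) :
    3 * (∫ v in (0:ℝ)..(2 * π), ((ρ v + ρ (v + π)) / 2) ^ 2)
      - (2 / π) * (∫ v in (0:ℝ)..(2 * π), ρ v) ^ 2
      - (∫ v in (0:ℝ)..(2 * π), (deriv ρ v) ^ 2)
      + (∫ v in (0:ℝ)..(2 * π), (ρ v) ^ 2) ≤ 0
    ∧
    (3 * (∫ v in (0:ℝ)..(2 * π), ((ρ v + ρ (v + π)) / 2) ^ 2)
      - (2 / π) * (∫ v in (0:ℝ)..(2 * π), ρ v) ^ 2
      - (∫ v in (0:ℝ)..(2 * π), (deriv ρ v) ^ 2)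
      + (∫ v in (0:ℝ)..(2 * π), (ρ v) ^ 2) = 0
      ↔ ∃ a b c d e : ℝ, ∀ v : ℝ,
          ρ v = a + b * Real.cos v + c * Real.sin v
            + d * Real.cos (2 * v) + e * Real.sin (2 * v)) :=
  stmt18_general ρ hρsmooth hρper
end
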